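/- For every integer m ≥ 0 there exists a constant β_m > 0 such that for all integers n ≥ 0, φ²_{n,m} ≤ β_m · (n+1)^{-5/2} · (27/2)^n. -/

import Mathlib

/-- The number of rooted type II triangulations of a disc with m+2 boundary
vertices and n internal vertices. -/
noncomputable def phi2 (n m : ℕ) : ℝ :=
  (2 ^ (n + 1) * Nat.factorial (2 * m + 1) * Nat.factorial (2 * m + 3 * n) : ℝ) /
    ((Nat.factorial m) ^ 2 * Nat.factorial n * Nat.factorial (2 * m + 2 * n + 2))

/-!
Write φ²_{n,m} = 2^{n+1} (2m+1)!/(m!)² · (2m+3n)!/(n! (2m+2n+2)!) and drop the (m!)².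
Removing 2m from both arguments of (2m+3n)!/(2m+2n)! costs at most (3/2)^{2m}, since each
factor (3n+i)/(2n+i) is at most 3/2. What remains is the binomial (3n)!/(n! (2n)!), which is
at most (27/4)^n/√(n+1) by induction on n (the step is a polynomial inequality), while
(2m+2n+2)! ≥ 2(n+1)² (2m+2n)! supplies the missing factor (n+1)⁻².
-/

open Nat Real

lemma rpow_five_halves {x : ℝ} (hx : 0 ≤ x) : x ^ (5 / 2 : ℝ) = x ^ 2 * √x := by
  rw [show (5 / 2 : ℝ) = 2 + 1 / 2 by norm_num, rpow_add' hx (by norm_num), rpow_two,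
    sqrt_eq_rpow]

lemma three_mul_factorial_step_le {x : ℝ} (hx : 0 ≤ x) :
    (3 * x + 1) * (3 * x + 2) * (3 * x + 3) * √(x + 2) ≤
      27 / 4 * ((x + 1) * (2 * x + 1) * (2 * x + 2)) * √(x + 1) := by
  have hsq : ((3 * x + 1) * (3 * x + 2) * (3 * x + 3)) ^ 2 * (x + 2) ≤
      (27 / 4 * ((x + 1) * (2 * x + 1) * (2 * x + 2))) ^ 2 * (x + 1) := by
    nlinarith [pow_nonneg hx 5, pow_nonneg hx 4, pow_nonneg hx 3, pow_nonneg hx 2]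
  calc (3 * x + 1) * (3 * x + 2) * (3 * x + 3) * √(x + 2)
      = √(((3 * x + 1) * (3 * x + 2) * (3 * x + 3)) ^ 2 * (x + 2)) := by
        rw [sqrt_mul (sq_nonneg _), sqrt_sq (by positivity)]
    _ ≤ √((27 / 4 * ((x + 1) * (2 * x + 1) * (2 * x + 2))) ^ 2 * (x + 1)) := sqrt_le_sqrt hsq
    _ = 27 / 4 * ((x + 1) * (2 * x + 1) * (2 * x + 2)) * √(x + 1) := by
        rw [sqrt_mul (sq_nonneg _), sqrt_sq (by positivity)]

lemma factorial_three_mul_mul_sqrt_le (n : ℕ) :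
    ((3 * n)! : ℝ) * √(n + 1) ≤ (27 / 4) ^ n * n ! * (2 * n)! := by
  induction n with
  | zero => simp
  | succ n ih =>
    rw [show 3 * (n + 1) = 3 * n + 1 + 1 + 1 by ring,
      show 2 * (n + 1) = 2 * n + 1 + 1 by ring]
    simp only [factorial_succ]
    push_cast
    have hstep := three_mul_factorial_step_le (Nat.cast_nonneg' n)
    rw [show (n : ℝ) + 1 + 1 = n + 2 by ring]
    calc _ = ((3 * n)! : ℝ) * ((3 * n + 1) * (3 * n + 2) * (3 * n + 3) * √(n + 2)) := by ring
      _ ≤ (3 * n)! * (27 / 4 * ((n + 1) * (2 * n + 1) * (2 * n + 2)) * √(n + 1)) := by gcongr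
      _ = 27 / 4 * ((n + 1) * (2 * n + 1) * (2 * n + 2)) * ((3 * n)! * √(n + 1)) := by ring
      _ ≤ 27 / 4 * ((n + 1) * (2 * n + 1) * (2 * n + 2)) * ((27 / 4) ^ n * n ! * (2 * n)!) := by
        gcongr
      _ = _ := by rw [pow_succ]; ring

lemma factorial_add_mul_factorial_le {a b : ℕ} {c : ℝ} (hc : 1 ≤ c)
    (hab : (b : ℝ) ≤ c * a) (k : ℕ) : ((b + k)! : ℝ) * a ! ≤ c ^ k * (a + k)! * b ! := by
  induction k with
  | zero => simp [mul_comm]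
  | succ k ih =>
    have hstep : (b + k + 1 : ℝ) ≤ c * (a + k + 1) := by nlinarith
    rw [← add_assoc, ← add_assoc, factorial_succ, factorial_succ]
    push_cast
    calc (b + k + 1 : ℝ) * (b + k)! * a ! = (b + k + 1) * ((b + k)! * a !) := by ring
      _ ≤ c * (a + k + 1) * (c ^ k * (a + k)! * b !) := by gcongr
      _ = _ := by ring

lemma two_mul_succ_sq_mul_factorial_le {n j : ℕ} (h : 2 * n ≤ j) :
    2 * (n + 1) ^ 2 * j ! ≤ (j + 2)! := by
  rw [factorial_succ, factorial_succ, ← mul_assoc]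
  exact Nat.mul_le_mul_right _ (by nlinarith)

lemma factorial_two_mul_add_three_mul_mul_rpow_le (m n : ℕ) :
    ((2 * m + 3 * n)! : ℝ) * (2 * ((n : ℝ) + 1) ^ (5 / 2 : ℝ)) ≤
      (3 / 2) ^ (2 * m) * (27 / 4) ^ n * n ! * (2 * m + 2 * n + 2)! := by
  have hshift :
      ((2 * m + 3 * n)! : ℝ) * (2 * n)! ≤ (3 / 2) ^ (2 * m) * (2 * m + 2 * n)! * (3 * n)! := by
    rw [add_comm (2 * m), add_comm (2 * m)]
    exact factorial_add_mul_factorial_le (by norm_num) (by push_cast; linarith) (2 * m)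
  have hcentral := factorial_three_mul_mul_sqrt_le n
  have hsucc : 2 * ((n : ℝ) + 1) ^ 2 * (2 * m + 2 * n)! ≤ (2 * m + 2 * n + 2)! := by
    exact_mod_cast two_mul_succ_sq_mul_factorial_le (by omega)
  rw [rpow_five_halves (by positivity)]
  refine le_of_mul_le_mul_right ?_ (by positivity : (0 : ℝ) < (2 * n)!)
  calc _ = 2 * ((n : ℝ) + 1) ^ 2 * √(n + 1) * ((2 * m + 3 * n)! * (2 * n)!) := by ring
    _ ≤ 2 * ((n : ℝ) + 1) ^ 2 * √(n + 1) *
        ((3 / 2) ^ (2 * m) * (2 * m + 2 * n)! * (3 * n)!) := by gcongr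
    _ = (3 / 2) ^ (2 * m) * (2 * ((n : ℝ) + 1) ^ 2 * (2 * m + 2 * n)!) *
        ((3 * n)! * √(n + 1)) := by ring
    _ ≤ (3 / 2) ^ (2 * m) * (2 * m + 2 * n + 2)! * ((27 / 4) ^ n * n ! * (2 * n)!) := by gcongr
    _ = _ := by ring

theorem phi2_upper_bound (m : ℕ) :
    ∃ β : ℝ, 0 < β ∧ ∀ n : ℕ,
      phi2 n m ≤ β * ((n : ℝ) + 1) ^ (-(5 / 2) : ℝ) * (27 / 2 : ℝ) ^ n := by
  refine ⟨(2 * m + 1)! * (3 / 2) ^ (2 * m), by positivity, fun n => ?_⟩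
  have hX : (0 : ℝ) < ((n : ℝ) + 1) ^ (5 / 2 : ℝ) := by positivity
  have hfac : (1 : ℝ) ≤ (m ! : ℝ) ^ 2 := one_le_pow₀ (by exact_mod_cast factorial_pos m)
  rw [rpow_neg (by positivity), mul_right_comm, ← div_eq_mul_inv, le_div_iff₀ hX, phi2,
    div_mul_eq_mul_div, div_le_iff₀ (by positivity)]
  calc _ = (2 : ℝ) ^ n * (2 * m + 1)! *
        ((2 * m + 3 * n)! * (2 * ((n : ℝ) + 1) ^ (5 / 2 : ℝ))) := by ring
    _ ≤ (2 : ℝ) ^ n * (2 * m + 1)! *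
        ((3 / 2) ^ (2 * m) * (27 / 4) ^ n * n ! * (2 * m + 2 * n + 2)!) :=
      mul_le_mul_of_nonneg_left (factorial_two_mul_add_three_mul_mul_rpow_le m n) (by positivity)
    _ = (2 * m + 1)! * (3 / 2) ^ (2 * m) * (27 / 2) ^ n * (1 * n ! * (2 * m + 2 * n + 2)!) := by
        rw [show (27 / 2 : ℝ) = 2 * (27 / 4) by norm_num, mul_pow]; ring
    _ ≤ _ := by gcongr
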